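/- No bipartite process function realizes the perfect GYNI correlation: there is no process function ω(o₁,o₂) = (f(o₂), g(o₁)) on Bool × Bool together with deterministic local interventions (for party k: outcome x_k = ξ_k(a_k, i_k) and output o_k = η_k(a_k, i_k), with the fixed point of the induced loop well-defined and unique) such that for all settings a₁, a₂ ∈ Bool the resulting outcomes satisfy x₁ = a₂ and x₂ = a₁. -/

import Mathlib

/-!
If `f` is constant, party 1's input is the same at every fixed point, so its outcome cannot
depend on party 2's setting, as GYNI demands; symmetrically for `g`. A non-constant map
`Bool → Bool` is surjective, and if both `f` and `g` are surjective, choosing `h₁, h₂` as right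
inverses of `g, f` turns the loop into `(i₁, i₂) ↦ (i₂, i₁)`, whose fixed points form the whole
diagonal.
-/

open Function

variable {α β σ : Type*}

/-- `ω(o₁, o₂) = (f o₂, g o₁)`, with inputs in `α` and outputs in `β`. -/
def IsProcessFunction (f g : β → α) : Prop :=
  ∀ h₁ h₂ : α → β, ∃! i : α × α, (f (h₂ i.2), g (h₁ i.1)) = i

/-- Settings and outcomes live in `σ`; `ξₖ` and `ηₖ` give party `k`'s outcome and output from
its setting and input. -/
def RealizesGYNI (f g : β → α) (ξ₁ ξ₂ : σ → α → σ) (η₁ η₂ : σ → α → β) : Prop :=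
  ∀ a₁ a₂ i₁ i₂,
    (f (η₂ a₂ i₂) = i₁ ∧ g (η₁ a₁ i₁) = i₂) → (ξ₁ a₁ i₁ = a₂ ∧ ξ₂ a₂ i₂ = a₁)

theorem IsProcessFunction.swap {f g : β → α} (hω : IsProcessFunction f g) :
    IsProcessFunction g f := fun h₁ h₂ =>
  (Equiv.prodComm α α).existsUnique_congr (fun i => by simp [Prod.ext_iff, and_comm]) |>.1
    (hω h₂ h₁)

theorem RealizesGYNI.swap {f g : β → α} {ξ₁ ξ₂ : σ → α → σ} {η₁ η₂ : σ → α → β}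
    (h : RealizesGYNI f g ξ₁ ξ₂ η₁ η₂) : RealizesGYNI g f ξ₂ ξ₁ η₂ η₁ :=
  fun a₁ a₂ i₁ i₂ hfix => (h a₂ a₁ i₂ i₁ hfix.symm).symm

theorem IsProcessFunction.not_surjective_and_surjective [Nontrivial α] {f g : β → α}
    (hω : IsProcessFunction f g) : ¬ (Surjective f ∧ Surjective g) := by
  rintro ⟨hf, hg⟩
  obtain ⟨x, y, hxy⟩ := exists_pair_ne α
  have diag_fixed : ∀ a : α, (f (surjInv hf a), g (surjInv hg a)) = (a, a) := fun a => by
    rw [surjInv_eq hf, surjInv_eq hg]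
  obtain ⟨i, -, huniq⟩ := hω (surjInv hg) (surjInv hf)
  have := (huniq (x, x) (diag_fixed x)).trans (huniq (y, y) (diag_fixed y)).symm
  exact hxy (congrArg Prod.fst this)

theorem RealizesGYNI.not_const_left [Nontrivial σ] {f g : β → α} {ξ₁ ξ₂ : σ → α → σ}
    {η₁ η₂ : σ → α → β} (h : RealizesGYNI f g ξ₁ ξ₂ η₁ η₂) (hω : IsProcessFunction f g) :
    ¬ ∀ o o', f o = f o' := by
  intro hf
  obtain ⟨x, y, hxy⟩ := exists_pair_ne σ
  have outcome_attains : ∀ a₂, ∃ o, ξ₁ x (f o) = a₂ := fun a₂ => by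
    obtain ⟨⟨i₁, i₂⟩, hfix, -⟩ := hω (η₁ x) (η₂ a₂)
    obtain ⟨hi₁, hi₂⟩ := Prod.mk.inj hfix
    exact ⟨η₂ a₂ i₂, hi₁ ▸ (h x a₂ i₁ i₂ ⟨hi₁, hi₂⟩).1⟩
  obtain ⟨o, ho⟩ := outcome_attains x
  obtain ⟨o', ho'⟩ := outcome_attains y
  exact hxy (ho.symm.trans (hf o o' ▸ ho'))

theorem Bool.surjective_or_const (f : Bool → Bool) : Surjective f ∨ ∀ a b, f a = f b := by
  cases h₀ : f false <;> cases h₁ : f true <;> simp [Surjective, Bool.forall_bool, h₀, h₁]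

/-- No bipartite process function `ω(o₁,o₂) = (f o₂, g o₁)` together with deterministic
local interventions (outcome `x_k = ξ_k a_k i_k`, output `o_k = η_k a_k i_k`) realizes
the perfect GYNI correlation `x₁ = a₂`, `x₂ = a₁`: at the (unique, by the process-function
property) fixed point of the induced loop, the outcomes cannot satisfy GYNI for all settings. -/
theorem no_processFunction_perfect_gyni :
    ¬ ∃ (f g : Bool → Bool) (ξ₁ ξ₂ η₁ η₂ : Bool → Bool → Bool),
        (∀ h₁ h₂ : Bool → Bool, ∃! i : Bool × Bool, (f (h₂ i.2), g (h₁ i.1)) = i) ∧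
        (∀ a₁ a₂ i₁ i₂ : Bool,
          (f (η₂ a₂ i₂) = i₁ ∧ g (η₁ a₁ i₁) = i₂) →
          (ξ₁ a₁ i₁ = a₂ ∧ ξ₂ a₂ i₂ = a₁)) := by
  rintro ⟨f, g, ξ₁, ξ₂, η₁, η₂, hω, hgyni⟩
  have hω : IsProcessFunction f g := hω
  have hgyni : RealizesGYNI f g ξ₁ ξ₂ η₁ η₂ := hgyni
  rcases Bool.surjective_or_const f with hf | hf
  · rcases Bool.surjective_or_const g with hg | hg
    · exact hω.not_surjective_and_surjective ⟨hf, hg⟩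
    · exact hgyni.swap.not_const_left hω.swap hg
  · exact hgyni.not_const_left hω hf
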